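/- Assume additionally that w(r) > 0 for almost every r in (0,1). Then for every delta > 0, every xi in Z^2 with xi ≠ 0, and every unit vector n in R^2: the real part Re(lambda_delta^n(xi)) is a scalar multiple of xi if and only if n is a scalar multiple of xi (i.e. n = xi/|xi| or n = -xi/|xi|). -/

import Mathlib

open MeasureTheory Real Set
open scoped BigOperators RealInnerProductSpace Pointwise ENNReal

noncomputable section

/-- The scaled kernel `w_δ(r) = δ^{-3} w(r/δ)` (dimension 2). -/
def wS (w : ℝ → ℝ) (δ r : ℝ) : ℝ := w (r / δ) / δ ^ 3

/-- The half space `H_n = {z : z ⬝ n ≥ 0}`. -/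
def halfSp (n : EuclideanSpace ℝ (Fin 2)) : Set (EuclideanSpace ℝ (Fin 2)) :=
  {z | 0 ≤ ∑ i, z i * n i}

/-- `i`-th component of the real part of the Fourier symbol:
`Re λ_δ^n(ξ) = 2 ∫_{H_n} w_δ(|s|) (s/|s|) (cos(ξ·s) - 1) ds`. -/
def symbRe (w : ℝ → ℝ) (δ : ℝ) (n : EuclideanSpace ℝ (Fin 2)) (ξ : Fin 2 → ℤ) (i : Fin 2) : ℝ :=
  2 * ∫ s in halfSp n, wS w δ ‖s‖ * s i * (Real.cos (∑ j, (ξ j : ℝ) * s j) - 1) / ‖s‖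

namespace SymbAux

abbrev Esp := EuclideanSpace ℝ (Fin 2)

noncomputable def vec2 (a b : ℝ) : Esp := (WithLp.equiv 2 (Fin 2 → ℝ)).symm ![a, b]
@[simp] lemma vec2_apply0 (a b : ℝ) : vec2 a b 0 = a := rfl
@[simp] lemma vec2_apply1 (a b : ℝ) : vec2 a b 1 = b := rfl

lemma inner_two (x y : Esp) : ⟪x, y⟫ = x 0 * y 0 + x 1 * y 1 := by
  simp [PiLp.inner_apply, RCLike.inner_apply, Fin.sum_univ_two]
  ring

lemma abs_coord_le (x : Esp) (i : Fin 2) : |x i| ≤ ‖x‖ := by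
  rw [EuclideanSpace.norm_eq]
  calc |x i| = Real.sqrt (|x i| ^ 2) := by rw [Real.sqrt_sq_eq_abs, abs_abs]
    _ ≤ _ := by
        apply Real.sqrt_le_sqrt
        have h := Finset.single_le_sum (f := fun j => ‖x j‖ ^ 2)
          (fun j _ => by positivity) (Finset.mem_univ i)
        simpa [Real.norm_eq_abs, sq_abs] using h

lemma halfSp_inner (m : Esp) : halfSp m = {z : Esp | 0 ≤ ⟪z, m⟫} := by
  ext z
  simp [halfSp, inner_two, Fin.sum_univ_two]

lemma halfSp_meas (m : Esp) : MeasurableSet (halfSp m) := by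
  rw [halfSp_inner]
  exact measurableSet_le measurable_const (continuous_id.inner continuous_const).measurable

lemma null_inner_eq (v : Esp) (hv : v ≠ 0) (c : ℝ) :
    volume {s : Esp | ⟪s, v⟫ = c} = 0 := by
  by_cases hne : {s : Esp | ⟪s, v⟫ = c}.Nonempty
  · obtain ⟨s₀, hs₀⟩ := hne
    simp only [mem_setOf_eq] at hs₀
    set Kr : Submodule ℝ Esp := LinearMap.ker ((innerSL ℝ v : Esp →L[ℝ] ℝ) : Esp →ₗ[ℝ] ℝ) with hKr
    have hker : volume (Kr : Set Esp) = 0 := by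
      apply Measure.addHaar_submodule
      intro htop
      have hvK : v ∈ Kr := htop ▸ Submodule.mem_top
      have : ⟪v, v⟫ = 0 := by simpa [hKr, LinearMap.mem_ker] using hvK
      exact hv (inner_self_eq_zero.mp this)
    have hset : {s : Esp | ⟪s, v⟫ = c} = (· + (-s₀)) ⁻¹' (Kr : Set Esp) := by
      ext s
      simp only [mem_setOf_eq, mem_preimage, SetLike.mem_coe, hKr, LinearMap.mem_ker,
        ContinuousLinearMap.coe_coe, innerSL_apply_apply, inner_add_right, inner_neg_right]
      rw [real_inner_comm v s₀] at hs₀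
      rw [hs₀, real_inner_comm s v]
      constructor <;> intro h <;> linarith
    rw [hset, measure_preimage_add_right]
    exact hker
  · rw [not_nonempty_iff_eq_empty] at hne
    rw [hne]
    exact measure_empty

lemma null_norm_level (N : Set ℝ) (hNmeas : MeasurableSet N) (hN : volume N = 0)
    {R : ℝ} (hsub : N ⊆ Set.Ioo 0 R) :
    volume {s : Esp | ‖s‖ ∈ N} = 0 := by
  set B : Set (ℝ × ℝ) := {p | Real.sqrt (p.1 ^ 2 + p.2 ^ 2) ∈ N} with hB
  have hsq : Measurable fun p : ℝ × ℝ => Real.sqrt (p.1 ^ 2 + p.2 ^ 2) :=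
    (continuous_fst.pow 2 |>.add (continuous_snd.pow 2)).sqrt.measurable
  have hBmeas : MeasurableSet B := hsq hNmeas
  have hBsub : B ⊆ Metric.closedBall 0 |R| := by
    intro p hp
    have h1 : Real.sqrt (p.1 ^ 2 + p.2 ^ 2) < |R| :=
      lt_of_lt_of_le (hsub hp).2 (le_abs_self R)
    have h2 : |p.1| ≤ Real.sqrt (p.1 ^ 2 + p.2 ^ 2) := by
      rw [← Real.sqrt_sq_eq_abs]; apply Real.sqrt_le_sqrt; nlinarith [sq_nonneg p.2]
    have h3 : |p.2| ≤ Real.sqrt (p.1 ^ 2 + p.2 ^ 2) := by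
      rw [← Real.sqrt_sq_eq_abs]; apply Real.sqrt_le_sqrt; nlinarith [sq_nonneg p.1]
    simp only [Metric.mem_closedBall, dist_zero_right, Prod.norm_def, Real.norm_eq_abs]
    exact max_le (le_of_lt (lt_of_le_of_lt h2 h1)) (le_of_lt (lt_of_le_of_lt h3 h1))
  have hBfin : volume B < ⊤ :=
    lt_of_le_of_lt (measure_mono hBsub) measure_closedBall_lt_top
  have h1 : ∫ p : ℝ × ℝ, B.indicator (fun _ => (1 : ℝ)) p = (volume B).toReal := by
    rw [integral_indicator_const (1 : ℝ) hBmeas]; simp [measureReal_def]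
  have h2 : ∫ p : ℝ × ℝ, B.indicator (fun _ => (1 : ℝ)) p = 0 := by
    rw [← integral_comp_polarCoord_symm]
    have hnull : volume {p : ℝ × ℝ | p.1 • B.indicator (fun _ => (1 : ℝ)) (polarCoord.symm p) ≠ 0} = 0 := by
      have hsubZ : {p : ℝ × ℝ | p.1 • B.indicator (fun _ => (1 : ℝ)) (polarCoord.symm p) ≠ 0}
          ⊆ (N ∪ Neg.neg ⁻¹' N) ×ˢ (univ : Set ℝ) := by
        intro p hp
        simp only [mem_setOf_eq] at hp
        have hind : B.indicator (fun _ => (1 : ℝ)) (polarCoord.symm p) ≠ 0 := by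
          intro h; rw [h, smul_zero] at hp; exact hp rfl
        have hmem : polarCoord.symm p ∈ B := by
          by_contra hc
          exact hind (Set.indicator_of_notMem hc _)
        have habs : |p.1| ∈ N := by
          have : Real.sqrt ((p.1 * Real.cos p.2) ^ 2 + (p.1 * Real.sin p.2) ^ 2) ∈ N := hmem
          have heq : (p.1 * Real.cos p.2) ^ 2 + (p.1 * Real.sin p.2) ^ 2 = p.1 ^ 2 := by
            have := Real.sin_sq_add_cos_sq p.2; nlinarith [this]
          rwa [heq, Real.sqrt_sq_eq_abs] at this
        simp only [Set.mem_prod, Set.mem_univ, and_true]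
        rcases abs_cases p.1 with ⟨h, _⟩ | ⟨h, _⟩
        · left; rwa [h] at habs
        · right; simp only [mem_preimage]; rwa [h] at habs
      refine measure_mono_null hsubZ ?_
      rw [Measure.volume_eq_prod, Measure.prod_prod]
      have hneg : volume (Neg.neg ⁻¹' N) = 0 := by
        rw [show Neg.neg ⁻¹' N = -N from rfl, Measure.measure_neg]; exact hN
      rw [measure_union_null hN hneg, zero_mul]
    have hae : (fun p : ℝ × ℝ => p.1 • B.indicator (fun _ => (1 : ℝ)) (polarCoord.symm p)) =ᵐ[volume] 0 := by
      rw [Filter.eventuallyEq_iff_exists_mem]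
      exact ⟨_, (ae_iff (p := fun p : ℝ × ℝ => p.1 • B.indicator (fun _ => (1:ℝ)) (polarCoord.symm p) = 0)).mpr (by simpa using hnull), fun x hx => hx⟩
    calc (∫ p in polarCoord.target, p.1 • B.indicator (fun _ => (1 : ℝ)) (polarCoord.symm p))
        = ∫ p in polarCoord.target, (0 : ℝ) := integral_congr_ae (hae.filter_mono (ae_mono Measure.restrict_le_self))
      _ = 0 := integral_zero _ _
  have hB0 : volume B = 0 := by
    have := h1.symm.trans h2
    exact (ENNReal.toReal_eq_zero_iff _).mp this |>.resolve_right (by exact ne_of_lt hBfin)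
  have hmp : MeasurePreserving (fun p : ℝ × ℝ =>
      (MeasurableEquiv.toLp 2 (Fin 2 → ℝ)) ((MeasurableEquiv.finTwoArrow).symm p)) :=
    (EuclideanSpace.volume_preserving_symm_measurableEquiv_toLp (Fin 2)).symm.comp
      (MeasurePreserving.symm _ (volume_preserving_finTwoArrow ℝ))
  have hmeasA : MeasurableSet {s : Esp | ‖s‖ ∈ N} := measurable_norm hNmeas
  have hpre : (fun p : ℝ × ℝ =>
      (MeasurableEquiv.toLp 2 (Fin 2 → ℝ)) ((MeasurableEquiv.finTwoArrow).symm p)) ⁻¹'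
      {s : Esp | ‖s‖ ∈ N} = B := by
    ext p
    simp only [mem_preimage, mem_setOf_eq, hB]
    have hnorm : ‖(MeasurableEquiv.toLp 2 (Fin 2 → ℝ)) ((MeasurableEquiv.finTwoArrow).symm p)‖
        = Real.sqrt (p.1 ^ 2 + p.2 ^ 2) := by
      rw [EuclideanSpace.norm_eq]
      congr 1
      rw [Fin.sum_univ_two]
      simp [MeasurableEquiv.coe_toLp, MeasurableEquiv.finTwoArrow,
        Real.norm_eq_abs, sq_abs]
    rw [hnorm]
  rw [← hmp.measure_preimage hmeasA.nullMeasurableSet, hpre]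
  exact hB0

section
variable {w : ℝ → ℝ} {δ : ℝ}

lemma integrable_G (hwmeas : Measurable w)
    (hmom : (∫ x : Esp, w ‖x‖ * ‖x‖) = 2) (hδ : 0 < δ) :
    Integrable (fun s : Esp => wS w δ ‖s‖ * ‖s‖) := by
  have hf₀ : Integrable (fun x : Esp => w ‖x‖ * ‖x‖) := by
    by_contra hc
    rw [integral_undef hc] at hmom
    norm_num at hmom
  have h1 : Integrable (fun s : Esp => w ‖δ⁻¹ • s‖ * ‖δ⁻¹ • s‖) :=
    (integrable_comp_smul_iff volume (fun x : Esp => w ‖x‖ * ‖x‖) (inv_ne_zero hδ.ne')).mpr hf₀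
  have h2 := h1.const_mul ((δ ^ 2)⁻¹)
  apply h2.congr
  apply Filter.Eventually.of_forall
  intro s
  show (δ ^ 2)⁻¹ * (w ‖δ⁻¹ • s‖ * ‖δ⁻¹ • s‖) = wS w δ ‖s‖ * ‖s‖
  have hns : ‖δ⁻¹ • s‖ = ‖s‖ / δ := by
    rw [norm_smul, Real.norm_eq_abs, abs_of_pos (inv_pos.mpr hδ)]
    rw [div_eq_inv_mul]
  rw [hns, wS]
  have hδ0 : δ ≠ 0 := hδ.ne'
  field_simp
  try ring
  try tauto

lemma gk_bound (hwnn : ∀ r, 0 ≤ w r) (hwsupp : ∀ r, 1 < r → w r = 0) (hδ : 0 < δ)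
    (v u : Esp) (s : Esp) :
    |wS w δ ‖s‖ * (Real.cos ⟪s, v⟫ - 1) / ‖s‖ * ⟪s, u⟫| ≤
      (‖v‖ ^ 2 * ‖u‖ * δ / 2) * (wS w δ ‖s‖ * ‖s‖) := by
  set r := ‖s‖ with hrdef
  have hr0 : 0 ≤ r := norm_nonneg s
  by_cases hrδ : r ≤ δ
  · have hwSnn : 0 ≤ wS w δ r := div_nonneg (hwnn _) (by positivity)
    have hcos1 : Real.cos ⟪s, v⟫ ≤ 1 := Real.cos_le_one _
    have hg_abs : |wS w δ r * (Real.cos ⟪s, v⟫ - 1) / r| =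
        wS w δ r * (1 - Real.cos ⟪s, v⟫) / r := by
      rw [abs_div, abs_mul, abs_of_nonneg hwSnn, abs_of_nonneg hr0, abs_sub_comm,
        abs_of_nonneg (by linarith)]
    have hB1 : 1 - Real.cos ⟪s, v⟫ ≤ (r * ‖v‖) ^ 2 / 2 := by
      have h := Real.one_sub_sq_div_two_le_cos (x := ⟪s, v⟫)
      have h2 : ⟪s, v⟫ ^ 2 ≤ (r * ‖v‖) ^ 2 := by
        calc ⟪s, v⟫ ^ 2 = |⟪s, v⟫| ^ 2 := (sq_abs _).symm
          _ ≤ (r * ‖v‖) ^ 2 :=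
            pow_le_pow_left₀ (abs_nonneg _) (abs_real_inner_le_norm s v) 2
      linarith
    have hB2 : |⟪s, u⟫| ≤ r * ‖u‖ := abs_real_inner_le_norm s u
    rw [abs_mul, hg_abs]
    rcases eq_or_lt_of_le hr0 with hr | hrpos
    · have hs0 : s = 0 := by rw [← norm_eq_zero]; exact hr.symm
      simp [hs0, ← hrdef, ← hr]
    · calc wS w δ r * (1 - Real.cos ⟪s, v⟫) / r * |⟪s, u⟫|
          ≤ wS w δ r * ((r * ‖v‖) ^ 2 / 2) / r * (r * ‖u‖) := by
            gcongr
        _ = (‖v‖ ^ 2 * ‖u‖ * r / 2) * (wS w δ r * r) := by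
            field_simp
        _ ≤ (‖v‖ ^ 2 * ‖u‖ * δ / 2) * (wS w δ r * r) := by gcongr
  · push_neg at hrδ
    have hw0 : w (r / δ) = 0 := hwsupp _ ((one_lt_div hδ).mpr hrδ)
    have hwS0 : wS w δ r = 0 := by rw [wS, hw0, zero_div]
    rw [hwS0]
    simp

lemma measurable_gk_mul (hwmeas : Measurable w) (v u : Esp) :
    Measurable (fun s : Esp => wS w δ ‖s‖ * (Real.cos ⟪s, v⟫ - 1) / ‖s‖ * ⟪s, u⟫) := by
  have m1 : Measurable fun s : Esp => ‖s‖ := measurable_norm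
  have mwS : Measurable fun s : Esp => wS w δ ‖s‖ := by
    show Measurable fun s : Esp => w (‖s‖ / δ) / δ ^ 3
    exact (hwmeas.comp (m1.div_const δ)).div_const _
  have minner : ∀ x : Esp, Measurable fun s : Esp => ⟪s, x⟫ := fun x =>
    (continuous_id.inner continuous_const).measurable
  exact (((mwS.mul (((minner v).cos).sub measurable_const)).div m1).mul (minner u))

lemma integrable_gk_mul (hwmeas : Measurable w) (hwnn : ∀ r, 0 ≤ w r)
    (hwsupp : ∀ r, 1 < r → w r = 0)
    (hmom : (∫ x : Esp, w ‖x‖ * ‖x‖) = 2) (hδ : 0 < δ) (v u : Esp) :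
    Integrable (fun s : Esp => wS w δ ‖s‖ * (Real.cos ⟪s, v⟫ - 1) / ‖s‖ * ⟪s, u⟫) := by
  apply Integrable.mono' (((integrable_G hwmeas hmom hδ)).const_mul (‖v‖ ^ 2 * ‖u‖ * δ / 2))
    (measurable_gk_mul hwmeas v u).aestronglyMeasurable
  apply Filter.Eventually.of_forall
  intro s
  rw [Real.norm_eq_abs]
  exact gk_bound hwnn hwsupp hδ v u s

lemma gk_nonpos (hwnn : ∀ r, 0 ≤ w r) (hδ : 0 < δ) (v : Esp) (s : Esp) :
    wS w δ ‖s‖ * (Real.cos ⟪s, v⟫ - 1) / ‖s‖ ≤ 0 := by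
  apply div_nonpos_of_nonpos_of_nonneg _ (norm_nonneg s)
  apply mul_nonpos_of_nonneg_of_nonpos
  · exact div_nonneg (hwnn _) (by positivity)
  · linarith [Real.cos_le_one ⟪s, v⟫]

end

set_option maxHeartbeats 2000000 in
/-- The core computation. -/
lemma core_iff (w : ℝ → ℝ) (hwmeas : Measurable w) (hwnn : ∀ r, 0 ≤ w r)
    (hwsupp : ∀ r, 1 < r → w r = 0)
    (hmom : (∫ x : Esp, w ‖x‖ * ‖x‖) = 2)
    (hwpos : ∀ᵐ r ∂(volume.restrict (Ioo (0 : ℝ) 1)), 0 < w r)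
    (δ : ℝ) (hδ : 0 < δ) (ξ0 ξ1 : ℝ) (hξ : ¬(ξ0 = 0 ∧ ξ1 = 0)) (n : Esp) :
    (∫ s in halfSp n,
        wS w δ ‖s‖ * (Real.cos ⟪s, vec2 ξ0 ξ1⟫ - 1) / ‖s‖ * ⟪s, vec2 ξ1 (-ξ0)⟫) = 0
      ↔ n 0 * ξ1 = n 1 * ξ0 := by
  set ξv : Esp := vec2 ξ0 ξ1 with hξv
  set νv : Esp := vec2 ξ1 (-ξ0) with hνv
  set F : Esp → ℝ := fun s => wS w δ ‖s‖ * (Real.cos ⟪s, ξv⟫ - 1) / ‖s‖ * ⟪s, νv⟫ with hF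
  set Q : ℝ := ξ0 ^ 2 + ξ1 ^ 2 with hQdef
  have hQ : 0 < Q := by
    rcases not_and_or.mp hξ with h | h
    · have := mul_self_pos.mpr h; nlinarith [sq_nonneg ξ1]
    · have := mul_self_pos.mpr h; nlinarith [sq_nonneg ξ0]
  have hξv0 : ξv ≠ 0 := by
    intro h
    apply hξ
    have h0 : ξv 0 = 0 := by rw [h]; rfl
    have h1 : ξv 1 = 0 := by rw [h]; rfl
    rw [hξv, vec2_apply0] at h0
    rw [hξv, vec2_apply1] at h1
    exact ⟨h0, h1⟩
  set K : Submodule ℝ Esp := ℝ ∙ ξv with hK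
  set R := K.reflection with hR
  have hinner_ξν : ⟪ξv, νv⟫ = 0 := by rw [inner_two]; simp [hξv, hνv]; ring
  have hRξ : R ξv = ξv := Submodule.reflection_mem_subspace_eq_self (Submodule.mem_span_singleton_self _)
  have hRν : R νv = -νv := Submodule.reflection_mem_subspace_orthogonalComplement_eq_neg
    (Submodule.mem_orthogonal_singleton_iff_inner_right.mpr hinner_ξν)
  have hadj : ∀ x y : Esp, ⟪R x, y⟫ = ⟪x, R y⟫ := by
    intro x y
    calc ⟪R x, y⟫ = ⟪R x, R (R y)⟫ := by rw [Submodule.reflection_reflection]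
      _ = ⟪x, R y⟫ := R.inner_map_map _ _
  have hmp : MeasurePreserving (⇑R) := R.measurePreserving
  have hemb : MeasurableEmbedding (⇑R) := R.toHomeomorph.measurableEmbedding
  have hdec : ∀ x : Esp, x = (⟪ξv, x⟫ / Q) • ξv + (⟪νv, x⟫ / Q) • νv := by
    intro x
    have hQ' : Q ≠ 0 := hQ.ne'
    have hQa : ξ0 ^ 2 + ξ1 ^ 2 ≠ 0 := hQ'
    have hQb : ξ1 ^ 2 + ξ0 ^ 2 ≠ 0 := by rw [add_comm]; exact hQa
    ext i
    fin_cases i <;>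
      simp only [PiLp.add_apply, PiLp.smul_apply, smul_eq_mul, hξv, hνv, hQdef,
        Fin.zero_eta, Fin.mk_one, vec2_apply0, vec2_apply1, inner_two] <;>
      (field_simp; ring)
  have hptw : ∀ s : Esp, F (R s) = -(F s) := by
    intro s
    rw [hF]
    simp only
    rw [R.norm_map, hadj s ξv, hRξ, hadj s νv, hRν, inner_neg_right]
    ring
  -- the reflected half space integral
  have hrefl : ∀ m : Esp, (⇑R) ⁻¹' (halfSp (R m)) = halfSp m := by
    intro m
    ext s
    simp only [mem_preimage, halfSp_inner, mem_setOf_eq]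
    rw [R.inner_map_map]
  constructor
  · -- K = 0 → parallel ; by contraposition
    intro hK0
    by_contra hpar
    -- a ≠ 0
    set a : ℝ := ⟪νv, n⟫ with ha_def
    have ha : a ≠ 0 := by
      intro h
      apply hpar
      rw [ha_def, inner_two] at h
      simp only [hνv, vec2_apply0, vec2_apply1] at h
      linarith
    have hRn_eq : R n = (⟪ξv, n⟫ / Q) • ξv - (⟪νv, n⟫ / Q) • νv := by
      conv_lhs => rw [hdec n]
      rw [map_add, R.map_smul, R.map_smul, hRξ, hRν]
      rw [smul_neg, sub_eq_add_neg]
    have hsubdiff : ∀ s : Esp, ⟪s, n⟫ - ⟪s, R n⟫ = (2 * a / Q) * ⟪s, νv⟫ := by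
      intro s
      rw [← inner_sub_right]
      have hnd : n - R n = (2 * a / Q) • νv := by
        rw [hRn_eq]
        nth_rewrite 1 [hdec n]
        rw [ha_def]
        module
      rw [hnd, real_inner_smul_right]
    have hFint : Integrable F := integrable_gk_mul hwmeas hwnn hwsupp hmom hδ ξv νv
    -- e1 : ∫ H' F = -K0val
    have hpre1 : (⇑R) ⁻¹' (halfSp (R n)) = halfSp n := hrefl n
    have he1 : ∫ s in halfSp (R n), F s = -∫ s in halfSp n, F s := by
      have h := hmp.setIntegral_preimage_emb hemb F (halfSp (R n))
      rw [hpre1] at h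
      rw [← h]
      have : ∫ x in halfSp n, F (R x) = ∫ x in halfSp n, -(F x) :=
        integral_congr_ae (Filter.Eventually.of_forall fun s => hptw s)
      rw [this, integral_neg]
    have hpre2 : (⇑R) ⁻¹' (halfSp (R n) \ halfSp n) = halfSp n \ halfSp (R n) := by
      ext s
      simp only [mem_preimage, mem_diff, halfSp_inner, mem_setOf_eq]
      rw [R.inner_map_map, hadj s n]
    have he2 : ∫ s in halfSp (R n) \ halfSp n, F s
        = -∫ s in halfSp n \ halfSp (R n), F s := by
      have h := hmp.setIntegral_preimage_emb hemb F (halfSp (R n) \ halfSp n)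
      rw [hpre2] at h
      rw [← h]
      have : ∫ x in halfSp n \ halfSp (R n), F (R x)
          = ∫ x in halfSp n \ halfSp (R n), -(F x) :=
        integral_congr_ae (Filter.Eventually.of_forall fun s => hptw s)
      rw [this, integral_neg]
    have hs1 := integral_inter_add_diff (s := halfSp n) (t := halfSp (R n))
      (halfSp_meas (R n)) hFint.integrableOn (f := F) (μ := volume)
    have hs2 := integral_inter_add_diff (s := halfSp (R n)) (t := halfSp n)
      (halfSp_meas n) hFint.integrableOn (f := F) (μ := volume)
    rw [Set.inter_comm (halfSp (R n)) (halfSp n)] at hs2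
    -- K = ∫_W F with W := halfSp n \ halfSp (R n)
    have hKW : ∫ s in halfSp n \ halfSp (R n), F s = ∫ s in halfSp n, F s := by
      linarith [hs1, hs2, he1, he2]
    -- now positivity
    set W : Set Esp := halfSp n \ halfSp (R n) with hW
    have hWmeas : MeasurableSet W := (halfSp_meas n).diff (halfSp_meas (R n))
    set F' : Esp → ℝ := fun s => (-a) * F s with hF'
    have hsign : ∀ s ∈ W, 0 ≤ F' s := by
      intro s hs
      rw [hW, mem_diff, halfSp_inner, halfSp_inner, mem_setOf_eq, mem_setOf_eq] at hs
      obtain ⟨hs1, hs2⟩ := hs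
      rw [not_le] at hs2
      have hd := hsubdiff s
      have h3 : 0 < (2 * a / Q) * ⟪s, νv⟫ := by linarith
      have h4 : 0 < a * ⟪s, νv⟫ := by
        have heq : (Q / 2) * ((2 * a / Q) * ⟪s, νv⟫) = a * ⟪s, νv⟫ := by
          field_simp
          try ring
        rw [← heq]
        exact mul_pos (by linarith) h3
      have h5 : wS w δ ‖s‖ * (Real.cos ⟪s, ξv⟫ - 1) / ‖s‖ ≤ 0 := gk_nonpos hwnn hδ ξv s
      rw [hF']
      simp only
      rw [hF]
      simp only
      nlinarith
    have hnn : 0 ≤ᵐ[volume.restrict W] F' :=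
      (ae_restrict_iff' hWmeas).mpr (Filter.Eventually.of_forall hsign)
    have hint : IntegrableOn F' W := (hFint.const_mul _).integrableOn
    -- null sets
    set N₀ : Set ℝ := {r : ℝ | w r ≤ 0} ∩ Ioo 0 1 with hN₀def
    have hN₀null : volume N₀ = 0 := by
      have h := hwpos
      rw [ae_restrict_iff' measurableSet_Ioo, ae_iff] at h
      refine measure_mono_null ?_ h
      intro r hr
      simp only [mem_setOf_eq, not_forall]
      rw [hN₀def] at hr
      exact ⟨hr.2, not_lt.mpr hr.1⟩
    set Nδ : Set ℝ := {r : ℝ | w (r / δ) ≤ 0} ∩ Ioo 0 δ with hNδdef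
    have hNδmeas : MeasurableSet Nδ :=
      ((hwmeas.comp (measurable_id.div_const δ)) measurableSet_Iic).inter measurableSet_Ioo
    have hNδnull : volume Nδ = 0 := by
      have hsub : Nδ ⊆ δ • N₀ := by
        intro r hr
        rw [Set.mem_smul_set_iff_inv_smul_mem₀ hδ.ne']
        rw [hNδdef] at hr
        constructor
        · simp only [mem_setOf_eq, smul_eq_mul]
          rw [inv_mul_eq_div]
          exact hr.1
        · constructor
          · simp only [smul_eq_mul]
            exact mul_pos (inv_pos.mpr hδ) hr.2.1
          · simp only [smul_eq_mul]
            rw [inv_mul_eq_div]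
            exact (div_lt_one hδ).mpr hr.2.2
      refine measure_mono_null hsub ?_
      rw [Measure.addHaar_smul, hN₀null, mul_zero]
    have hNδsub : Nδ ⊆ Ioo 0 δ := inter_subset_right
    have hZ1 : volume {s : Esp | ‖s‖ ∈ Nδ} = 0 := null_norm_level Nδ hNδmeas hNδnull hNδsub
    have hZ2 : volume (⋃ k : ℤ, {s : Esp | ⟪s, ξv⟫ = (k : ℝ) * (2 * π)}) = 0 :=
      measure_iUnion_null fun k => null_inner_eq ξv hξv0 _
    set Z : Set Esp := {s : Esp | ‖s‖ ∈ Nδ} ∪ ⋃ k : ℤ, {s : Esp | ⟪s, ξv⟫ = (k : ℝ) * (2 * π)}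
      with hZdef
    have hZnull : volume Z = 0 := measure_union_null hZ1 hZ2
    -- the open wedge
    have hcont : ∀ m : Esp, Continuous fun s : Esp => ⟪s, m⟫ := fun m =>
      continuous_id.inner continuous_const
    set U : Set Esp := (({s : Esp | 0 < ⟪s, n⟫} ∩ {s : Esp | ⟪s, R n⟫ < 0})
      ∩ Metric.ball (0 : Esp) δ) with hUdef
    have hUopen : IsOpen U := by
      apply IsOpen.inter _ Metric.isOpen_ball
      apply IsOpen.inter
      · exact isOpen_lt continuous_const (hcont n)
      · exact isOpen_lt (hcont (R n)) continuous_const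
    have hν0 : νv ≠ 0 := by
      intro h
      apply hξ
      have h0 : νv 0 = 0 := by rw [h]; rfl
      have h1 : νv 1 = 0 := by rw [h]; rfl
      rw [hνv, vec2_apply0] at h0
      rw [hνv, vec2_apply1] at h1
      exact ⟨by linarith, h0⟩
    have hUne : U.Nonempty := by
      set ε : ℝ := δ / (2 * (|a| * ‖νv‖ + 1)) with hε
      have hεpos : 0 < ε := by positivity
      refine ⟨(ε * a) • νv, ⟨?_, ?_⟩, ?_⟩
      · simp only [Set.mem_setOf_eq]
        rw [real_inner_smul_left]
        have : 0 < a * a := mul_self_pos.mpr ha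
        rw [← ha_def]
        nlinarith
      · simp only [Set.mem_setOf_eq]
        rw [real_inner_smul_left]
        have hνRn : ⟪νv, R n⟫ = -a := by
          rw [← hadj νv n, hRν, inner_neg_left, ← ha_def]
        rw [hνRn]
        have : 0 < a * a := mul_self_pos.mpr ha
        nlinarith
      · rw [Metric.mem_ball, dist_zero_right, norm_smul, Real.norm_eq_abs]
        have h1 : |ε * a| * ‖νv‖ = ε * (|a| * ‖νv‖) := by
          rw [abs_mul, abs_of_pos hεpos, mul_assoc]
        rw [h1]
        have h2 : ε * (|a| * ‖νv‖) ≤ ε * (|a| * ‖νv‖ + 1) := by nlinarith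
        have h3 : ε * (|a| * ‖νv‖ + 1) = δ / 2 := by
          rw [hε]
          field_simp
        linarith
    have hUsub : U \ Z ⊆ Function.support F' ∩ W := by
      intro s hs
      obtain ⟨⟨⟨hs1, hs2⟩, hball⟩, hnZ⟩ := hs
      have hs1' : (0 : ℝ) < ⟪s, n⟫ := hs1
      have hs2' : ⟪s, R n⟫ < 0 := hs2
      have hsW : s ∈ W := by
        rw [hW, mem_diff, halfSp_inner, halfSp_inner]
        simp only [Set.mem_setOf_eq]
        exact ⟨le_of_lt hs1', not_le.mpr hs2'⟩
      refine ⟨?_, hsW⟩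
      rw [Function.mem_support]
      -- show F' s > 0
      have hd := hsubdiff s
      have h3 : 0 < (2 * a / Q) * ⟪s, νv⟫ := by linarith
      have h4 : 0 < a * ⟪s, νv⟫ := by
        have heq : (Q / 2) * ((2 * a / Q) * ⟪s, νv⟫) = a * ⟪s, νv⟫ := by
          field_simp
          try ring
        rw [← heq]
        exact mul_pos (by linarith) h3
      have hsne : s ≠ 0 := by
        intro h
        rw [h, inner_zero_left] at hs1'
        exact lt_irrefl 0 hs1'
      have hrpos : 0 < ‖s‖ := norm_pos_iff.mpr hsne
      have hrlt : ‖s‖ < δ := by rwa [Metric.mem_ball, dist_zero_right] at hball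
      rw [hZdef, Set.mem_union, not_or] at hnZ
      obtain ⟨hnZ1, hnZ2⟩ := hnZ
      have hwpos' : 0 < w (‖s‖ / δ) := by
        by_contra hc
        apply hnZ1
        rw [mem_setOf_eq, hNδdef]
        exact ⟨not_lt.mp hc, hrpos, hrlt⟩
      have hcoslt : Real.cos ⟪s, ξv⟫ < 1 := by
        rcases lt_or_eq_of_le (Real.cos_le_one ⟪s, ξv⟫) with h | h
        · exact h
        · exfalso
          apply hnZ2
          obtain ⟨k, hk⟩ := (Real.cos_eq_one_iff _).mp h
          rw [Set.mem_iUnion]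
          exact ⟨k, by rw [mem_setOf_eq, ← hk]⟩
      have hwSpos : 0 < wS w δ ‖s‖ := div_pos hwpos' (by positivity)
      have hgneg : wS w δ ‖s‖ * (Real.cos ⟪s, ξv⟫ - 1) / ‖s‖ < 0 :=
        div_neg_of_neg_of_pos (mul_neg_of_pos_of_neg hwSpos (by linarith)) hrpos
      have : 0 < F' s := by
        rw [hF']
        simp only
        rw [hF]
        simp only
        nlinarith
      exact ne_of_gt this
    have hUZvol : volume (U \ Z) = volume U := measure_diff_null hZnull
    have hUvol : 0 < volume U := hUopen.measure_pos volume hUne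
    have hsuppvol : 0 < volume (Function.support F' ∩ W) := by
      calc (0 : ℝ≥0∞) < volume U := hUvol
        _ = volume (U \ Z) := hUZvol.symm
        _ ≤ volume (Function.support F' ∩ W) := measure_mono hUsub
    have hintpos : 0 < ∫ s in W, F' s :=
      (setIntegral_pos_iff_support_of_nonneg_ae hnn hint).mpr hsuppvol
    have hF'int : ∫ s in W, F' s = (-a) * ∫ s in W, F s := by
      rw [hF']
      exact integral_const_mul (-a) _
    rw [hF'int, hW, hKW, hK0, mul_zero] at hintpos
    exact lt_irrefl 0 hintpos
  · -- parallel → K = 0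
    intro hpar
    have hνn : ⟪νv, n⟫ = 0 := by
      rw [inner_two]
      simp only [hνv, vec2_apply0, vec2_apply1]
      linarith
    have hmem : n ∈ K := by
      have hn_eq : n = (⟪ξv, n⟫ / Q) • ξv := by
        conv_lhs => rw [hdec n]
        rw [hνn]
        simp
      rw [hn_eq]
      exact Submodule.smul_mem _ _ (Submodule.mem_span_singleton_self _)
    have hRn : R n = n := Submodule.reflection_mem_subspace_eq_self hmem
    have hpre : (⇑R) ⁻¹' (halfSp n) = halfSp n := by
      have := hrefl n
      rwa [hRn] at this
    have h := hmp.setIntegral_preimage_emb hemb F (halfSp n)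
    rw [hpre] at h
    have h2 : ∫ x in halfSp n, F (R x) = ∫ x in halfSp n, -(F x) :=
      integral_congr_ae (Filter.Eventually.of_forall fun s => hptw s)
    rw [h2, integral_neg] at h
    linarith

lemma two_exists_iff {A0 A1 b0 b1 : ℝ} (hb : ¬(b0 = 0 ∧ b1 = 0)) :
    (∃ c : ℝ, A0 = c * b0 ∧ A1 = c * b1) ↔ A0 * b1 = A1 * b0 := by
  constructor
  · rintro ⟨c, h0, h1⟩
    rw [h0, h1]
    ring
  · intro h
    rcases not_and_or.mp hb with hb0 | hb1
    · refine ⟨A0 / b0, by field_simp, ?_⟩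
      rw [div_mul_eq_mul_div, eq_div_iff hb0]
      linarith
    · refine ⟨A1 / b1, ?_, by field_simp⟩
      rw [div_mul_eq_mul_div, eq_div_iff hb1]
      linarith

end SymbAux

open SymbAux

/-- if `w > 0` a.e. on `(0,1)`, then `Re(λ_δ^n(ξ))` is a scalar multiple of `ξ`
iff `n` is a scalar multiple of `ξ`. -/
theorem symbRe_parallel_iff
    (w : ℝ → ℝ) (hwmeas : Measurable w) (hwnn : ∀ r, 0 ≤ w r)
    (hwsupp : ∀ r, 1 < r → w r = 0)
    (hmom : (∫ x : EuclideanSpace ℝ (Fin 2), w ‖x‖ * ‖x‖) = 2)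
    (hwpos : ∀ᵐ r ∂(volume.restrict (Ioo (0 : ℝ) 1)), 0 < w r)
    (δ : ℝ) (hδ : 0 < δ) (ξ : Fin 2 → ℤ) (hξ : ξ ≠ 0)
    (n : EuclideanSpace ℝ (Fin 2)) (hn : ‖n‖ = 1) :
    (∃ c : ℝ, ∀ i, symbRe w δ n ξ i = c * (ξ i : ℝ)) ↔ (∃ c : ℝ, ∀ i, n i = c * (ξ i : ℝ)) := by
  have hξc : ¬((ξ 0 : ℝ) = 0 ∧ (ξ 1 : ℝ) = 0) := by
    rintro ⟨h0, h1⟩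
    apply hξ
    funext i
    fin_cases i
    · exact_mod_cast h0
    · exact_mod_cast h1
  set ξv : Esp := vec2 (ξ 0 : ℝ) (ξ 1 : ℝ) with hξv
  set νv : Esp := vec2 (ξ 1 : ℝ) (-(ξ 0 : ℝ)) with hνv
  set Fg : Esp → ℝ := fun s => wS w δ ‖s‖ * (Real.cos ⟪s, ξv⟫ - 1) / ‖s‖ with hFg
  set K : ℝ := ∫ s in halfSp n, Fg s * ⟪s, νv⟫ with hK
  have hcore : K = 0 ↔ n 0 * (ξ 1 : ℝ) = n 1 * (ξ 0 : ℝ) := by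
    rw [hK]
    exact core_iff w hwmeas hwnn hwsupp hmom hwpos δ hδ (ξ 0 : ℝ) (ξ 1 : ℝ) hξc n
  -- bridging symbRe to coordinate integrals of Fg
  have hcosarg : ∀ s : Esp, (∑ j, (ξ j : ℝ) * s j) = ⟪s, ξv⟫ := by
    intro s
    rw [inner_two, Fin.sum_univ_two]
    simp only [hξv, vec2_apply0, vec2_apply1]
    ring
  have hsymb : ∀ i : Fin 2, symbRe w δ n ξ i = 2 * ∫ s in halfSp n, Fg s * s i := by
    intro i
    rw [symbRe]
    congr 1
    apply integral_congr_ae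
    apply Filter.Eventually.of_forall
    intro s
    dsimp only
    rw [hcosarg s, hFg]
    ring
  have hint : ∀ u : Esp, Integrable (fun s : Esp => Fg s * ⟪s, u⟫) := fun u =>
    integrable_gk_mul hwmeas hwnn hwsupp hmom hδ ξv u
  have hIc0 : Integrable (fun s : Esp => Fg s * s 0) := by
    apply (hint (vec2 1 0)).congr
    apply Filter.Eventually.of_forall
    intro s
    dsimp only
    rw [inner_two]
    simp
  have hIc1 : Integrable (fun s : Esp => Fg s * s 1) := by
    apply (hint (vec2 0 1)).congr
    apply Filter.Eventually.of_forall
    intro s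
    dsimp only
    rw [inner_two]
    simp
  have hKeq : (∫ s in halfSp n, Fg s * s 0) * (ξ 1 : ℝ)
      - (∫ s in halfSp n, Fg s * s 1) * (ξ 0 : ℝ) = K := by
    rw [← integral_mul_const, ← integral_mul_const, ← integral_sub
      ((hIc0.mul_const _).integrableOn) ((hIc1.mul_const _).integrableOn)]
    rw [hK]
    apply integral_congr_ae
    apply Filter.Eventually.of_forall
    intro s
    dsimp only
    rw [inner_two]
    simp only [hνv, vec2_apply0, vec2_apply1]
    ring
  have h2K : symbRe w δ n ξ 0 * (ξ 1 : ℝ) - symbRe w δ n ξ 1 * (ξ 0 : ℝ) = 2 * K := by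
    rw [hsymb 0, hsymb 1]
    linear_combination 2 * hKeq
  have hiff1 : (∃ c : ℝ, ∀ i, symbRe w δ n ξ i = c * (ξ i : ℝ))
      ↔ symbRe w δ n ξ 0 * (ξ 1 : ℝ) = symbRe w δ n ξ 1 * (ξ 0 : ℝ) := by
    rw [← two_exists_iff hξc]
    constructor
    · rintro ⟨c, hc⟩; exact ⟨c, hc 0, hc 1⟩
    · rintro ⟨c, h0, h1⟩
      refine ⟨c, fun i => ?_⟩
      fin_cases i
      · exact h0
      · exact h1
  have hiff2 : (∃ c : ℝ, ∀ i, n i = c * (ξ i : ℝ))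
      ↔ n 0 * (ξ 1 : ℝ) = n 1 * (ξ 0 : ℝ) := by
    rw [← two_exists_iff hξc]
    constructor
    · rintro ⟨c, hc⟩; exact ⟨c, hc 0, hc 1⟩
    · rintro ⟨c, h0, h1⟩
      refine ⟨c, fun i => ?_⟩
      fin_cases i
      · exact h0
      · exact h1
  rw [hiff1, hiff2, ← hcore]
  constructor
  · intro h
    linarith [h2K]
  · intro h
    linarith [h2K]

end
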